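/- arXiv:1204.3312 — 3 statements merged into one kernel-verified Lean document; each statement's English description precedes it below -/
import Mathlib

section
/- Let V be a module over a commutative ring R with a bilinear multiplication μ : V ⊗ V → V and an element 1 ∈ V that is a right unit (μ(v ⊗ 1) = v for all v). Define σ : V ⊗ V → V ⊗ V by σ(v ⊗ w) = 1 ⊗ μ(v ⊗ w). Then σ satisfies the Yang–Baxter equation σ₁σ₂σ₁ = σ₂σ₁σ₂ on V^⊗3 if and only if μ is associative. -/
/-!
On pure tensors both sides of the Yang–Baxter equation push everything into the last factor:
using the right unit, `σ₁σ₂σ₁ (v ⊗ w ⊗ u) = 1 ⊗ 1 ⊗ (v w) u` and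
`σ₂σ₁σ₂ (v ⊗ w ⊗ u) = 1 ⊗ 1 ⊗ v (w u)`. The map `x ↦ 1 ⊗ 1 ⊗ x` has a left inverse
`a ⊗ b ⊗ c ↦ (c b) a`, so the two sides agree exactly when `μ` is associative.
-/

open TensorProduct

variable {R V : Type*} [CommRing R] [AddCommGroup V] [Module R V]

/-- `σ ⊗ id` as an endomorphism of `V ⊗ (V ⊗ V)`. -/
noncomputable def sigma1 (σ : V ⊗[R] V →ₗ[R] V ⊗[R] V) :
    V ⊗[R] (V ⊗[R] V) →ₗ[R] V ⊗[R] (V ⊗[R] V) :=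
  (TensorProduct.assoc R V V V).toLinearMap ∘ₗ (LinearMap.rTensor V σ) ∘ₗ
    (TensorProduct.assoc R V V V).symm.toLinearMap

/-- `id ⊗ σ` as an endomorphism of `V ⊗ (V ⊗ V)`. -/
noncomputable def sigma2 (σ : V ⊗[R] V →ₗ[R] V ⊗[R] V) :
    V ⊗[R] (V ⊗[R] V) →ₗ[R] V ⊗[R] (V ⊗[R] V) :=
  LinearMap.lTensor V σ

/-- The Yang–Baxter equation for `σ : V ⊗ V → V ⊗ V`. -/
def YangBaxter (σ : V ⊗[R] V →ₗ[R] V ⊗[R] V) : Prop :=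
  sigma1 σ ∘ₗ sigma2 σ ∘ₗ sigma1 σ = sigma2 σ ∘ₗ sigma1 σ ∘ₗ sigma2 σ

theorem sigma1_tmul (σ : V ⊗[R] V →ₗ[R] V ⊗[R] V) (a b c : V) :
    sigma1 σ (a ⊗ₜ (b ⊗ₜ c)) = TensorProduct.assoc R V V V (σ (a ⊗ₜ b) ⊗ₜ c) := by
  simp [sigma1]

theorem sigma2_tmul (σ : V ⊗[R] V →ₗ[R] V ⊗[R] V) (a : V) (x : V ⊗[R] V) :
    sigma2 σ (a ⊗ₜ x) = a ⊗ₜ σ x :=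
  LinearMap.lTensor_tmul V σ a x

theorem yangBaxter_iff_tmul (σ : V ⊗[R] V →ₗ[R] V ⊗[R] V) :
    YangBaxter σ ↔ ∀ a b c : V,
      sigma1 σ (sigma2 σ (sigma1 σ (a ⊗ₜ (b ⊗ₜ c)))) =
        sigma2 σ (sigma1 σ (sigma2 σ (a ⊗ₜ (b ⊗ₜ c)))) :=
  ⟨fun h a b c => LinearMap.congr_fun h (a ⊗ₜ (b ⊗ₜ c)), fun h => ext_threefold' h⟩

noncomputable def assocBraiding (μ : V →ₗ[R] V →ₗ[R] V) (one : V) :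
    V ⊗[R] V →ₗ[R] V ⊗[R] V :=
  TensorProduct.mk R V V one ∘ₗ TensorProduct.lift μ

theorem assocBraiding_tmul (μ : V →ₗ[R] V →ₗ[R] V) (one v w : V) :
    assocBraiding μ one (v ⊗ₜ w) = one ⊗ₜ μ v w := by
  simp [assocBraiding]

section RightUnit

variable {μ : V →ₗ[R] V →ₗ[R] V} {one : V}

theorem sigma1_sigma2_sigma1_assocBraiding (hrunit : ∀ v : V, μ v one = v) (a b c : V) :
    sigma1 (assocBraiding μ one) (sigma2 (assocBraiding μ one)
      (sigma1 (assocBraiding μ one) (a ⊗ₜ (b ⊗ₜ c)))) = one ⊗ₜ (one ⊗ₜ μ (μ a b) c) := by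
  simp only [sigma1_tmul, sigma2_tmul, assocBraiding_tmul, assoc_tmul, hrunit]

theorem sigma2_sigma1_sigma2_assocBraiding (hrunit : ∀ v : V, μ v one = v) (a b c : V) :
    sigma2 (assocBraiding μ one) (sigma1 (assocBraiding μ one)
      (sigma2 (assocBraiding μ one) (a ⊗ₜ (b ⊗ₜ c)))) = one ⊗ₜ (one ⊗ₜ μ a (μ b c)) := by
  simp only [sigma1_tmul, sigma2_tmul, assocBraiding_tmul, assoc_tmul, hrunit]

theorem tmul_tmul_injective_of_mul_one (hrunit : ∀ v : V, μ v one = v) :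
    Function.Injective fun x : V => one ⊗ₜ[R] (one ⊗ₜ[R] x) :=
  Function.LeftInverse.injective (g := lift μ.flip ∘ₗ (lift μ.flip).lTensor V) fun x => by
    simp [hrunit]

end RightUnit

/-- for a bilinear multiplication `μ` with right unit `1`, the map
`σ(v ⊗ w) = 1 ⊗ μ(v ⊗ w)` satisfies the Yang–Baxter equation iff `μ` is associative. -/
theorem assoc_braiding_yang_baxter_iff_associative
    (μ : V →ₗ[R] V →ₗ[R] V) (one : V)
    (hrunit : ∀ v : V, μ v one = v) :
    YangBaxter ((TensorProduct.mk R V V one) ∘ₗ (TensorProduct.lift μ)) ↔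
      ∀ v w u : V, μ (μ v w) u = μ v (μ w u) := by
  change YangBaxter (assocBraiding μ one) ↔ _
  simp only [yangBaxter_iff_tmul, sigma1_sigma2_sigma1_assocBraiding hrunit,
    sigma2_sigma1_sigma2_assocBraiding hrunit, (tmul_tmul_injective_of_mul_one hrunit).eq_iff]
end

section
/- Let (S, ◁) be a shelf, V = kS its linearization, and ε : V → k the linear map with ε(a) = 1 for all a ∈ S. Then the map d(a₁,…,aₙ) = Σ_{i=1}^{n} (−1)^{i−1} (a₁◁aᵢ, …, a_{i−1}◁aᵢ, a_{i+1}, …, aₙ) satisfies d ∘ d = 0 on the tensor powers of V. -/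
/-! The faces `∂ᵢ(a) = (a₁◁aᵢ, …, a_{i−1}◁aᵢ, a_{i+1}, …)` satisfy the semi-simplicial identities
`∂ᵢ ∂ⱼ₊₁ = ∂ⱼ ∂ᵢ` for `i ≤ j`: on the first `i - 1` coordinates this is self-distributivity,
`(a◁aᵢ)◁aⱼ₊₁ = (a◁aⱼ₊₁)◁(aᵢ◁aⱼ₊₁)`, and elsewhere both sides agree on the nose. As for any
semi-simplicial object, the terms of `d ∘ d = Σⱼ Σᵢ (-1)^(i+j) ∂ᵢ ∂ⱼ` then cancel in pairs. -/

variable {k : Type*} [CommRing k] {S : Type*}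

/-- The `i`-th face on tuples (1-indexed `i` corresponds to `Fin`-index `i`):
`(a₁,…,a_{n+1}) ↦ (a₁◁aᵢ, …, a_{i−1}◁aᵢ, a_{i+1}, …, a_{n+1})`. -/
def shelfFaceTuple (op : S → S → S) {n : ℕ} (i : Fin (n+1)) (a : Fin (n+1) → S) :
    Fin n → S :=
  fun p => if h : (p : ℕ) < (i : ℕ) then op (a p.castSucc) (a i) else a p.succ

variable (k) in
/-- The one-term distributive differential `d(a₁,…,aₙ) =
Σᵢ (−1)^{i−1}(a₁◁aᵢ,…,a_{i−1}◁aᵢ,a_{i+1},…,aₙ)` on the free module on `S^{n+1}`. -/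
noncomputable def shelfD (op : S → S → S) (n : ℕ) :
    ((Fin (n+1) → S) →₀ k) →ₗ[k] ((Fin n → S) →₀ k) :=
  ∑ i : Fin (n+1), ((-1 : k)^(i : ℕ)) • Finsupp.lmapDomain k k (shelfFaceTuple op i)

theorem Fin.alternating_double_sum_eq_zero {R M : Type*} [Ring R] [AddCommGroup M] [Module R M]
    {n : ℕ} (f : Fin (n + 1) → Fin (n + 2) → M)
    (hf : ∀ i j : Fin (n + 1), i ≤ j → f i j.succ = f j i.castSucc) :
    ∑ j : Fin (n + 2), (-1 : R) ^ (j : ℕ) • ∑ i : Fin (n + 1), (-1 : R) ^ (i : ℕ) • f i j = 0 := by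
  set lower : Finset (Fin (n + 1) × Fin (n + 2)) := {p | (p.2 : ℕ) ≤ p.1}
  have mem {p} : p ∈ lower ↔ (p.2 : ℕ) ≤ p.1 := by simp [lower]
  have mem_compl {p} : p ∈ lowerᶜ ↔ (p.1 : ℕ) < p.2 := by simp [lower]
  simp only [Finset.smul_sum]
  rw [Finset.sum_comm, ← Finset.sum_product', Finset.univ_product_univ,
    ← Finset.sum_add_sum_compl lower, add_eq_zero_iff_eq_neg, ← Finset.sum_neg_distrib]
  -- `(i, j) ↦ (j, i + 1)` matches the terms with `j ≤ i` against those with `i < j`.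
  refine Finset.sum_bij' (fun p hp => (p.2.castLT (by have := mem.1 hp; omega), p.1.succ))
    (fun p hp => (p.2.pred fun h => by simp [mem_compl, h] at hp, p.1.castSucc))
    (fun p hp => ?_) (fun p hp => ?_) (fun p hp => by simp) (fun p hp => by simp) ?_
  · simp only [mem, mem_compl, Fin.val_castLT, Fin.val_succ] at hp ⊢
    omega
  · simp only [mem, mem_compl, Fin.val_castSucc, Fin.val_pred] at hp ⊢
    omega
  · rintro ⟨i, j⟩ hp
    replace hp : (j : ℕ) ≤ i := mem.1 hp
    obtain ⟨j, rfl⟩ : ∃ j', Fin.castSucc j' = j := ⟨j.castLT (by omega), Fin.castSucc_castLT _ _⟩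
    have hji : j ≤ i := Fin.le_def.2 hp
    simp only [Fin.val_castSucc, Fin.val_succ, Fin.castLT_castSucc, hf j i hji, pow_succ,
      mul_neg, mul_one, neg_smul, neg_neg]
    rw [smul_smul, smul_smul, ← pow_add, ← pow_add, add_comm]

theorem shelfFaceTuple_shelfFaceTuple_succ {op : S → S → S}
    (selfdistr : ∀ a b c : S, op (op a b) c = op (op a c) (op b c))
    {n : ℕ} {i j : Fin (n + 1)} (hij : i ≤ j) (a : Fin (n + 2) → S) :
    shelfFaceTuple op i (shelfFaceTuple op j.succ a) =
      shelfFaceTuple op j (shelfFaceTuple op i.castSucc a) := by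
  rw [Fin.le_def] at hij
  funext p
  simp only [shelfFaceTuple, Fin.val_castSucc, Fin.val_succ]
  split_ifs <;> first | rfl | exact (selfdistr _ _ _).symm | omega

/-- for a shelf `(S, ◁)` the one-term distributive differential squares
to zero. -/
theorem shelf_differential_squares_to_zero
    (op : S → S → S)
    (selfdistr : ∀ a b c : S, op (op a b) c = op (op a c) (op b c)) :
    ∀ n : ℕ, shelfD k op n ∘ₗ shelfD k op (n+1) = 0 := by
  intro n
  refine LinearMap.ext fun x => ?_
  simp only [shelfD, LinearMap.comp_apply, LinearMap.sum_apply, LinearMap.smul_apply, map_sum,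
    map_smul, LinearMap.zero_apply]
  refine Fin.alternating_double_sum_eq_zero (R := k)
    (fun i j => Finsupp.lmapDomain k k (shelfFaceTuple op i)
      (Finsupp.lmapDomain k k (shelfFaceTuple op j) x)) fun i j hij => ?_
  simp only [← LinearMap.comp_apply, ← Finsupp.lmapDomain_comp,
    Function.comp_def, shelfFaceTuple_shelfFaceTuple_succ selfdistr hij]
end

section
/- Let (V, [,], 1) be a unital Leibniz algebra with braiding σ(v⊗w) = w⊗v + 1⊗[v,w], and let M be a vector space with a normalized map ρ : M ⊗ V → M (ρ(m⊗1) = m). Then the braided module condition ρ ∘ (ρ ⊗ id) = ρ ∘ (ρ ⊗ id) ∘ (id_M ⊗ σ) is equivalent to the Leibniz module condition m·[v,w] = (m·v)·w − (m·w)·v for all m ∈ M, v, w ∈ V. -/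
open TensorProduct

namespace LeibnizModule

variable {k V M : Type*} [CommRing k] [AddCommGroup V] [Module k V] [AddCommGroup M] [Module k M]

def braiding (br : V →ₗ[k] V →ₗ[k] V) (one : V) : V ⊗[k] V →ₗ[k] V ⊗[k] V :=
  (TensorProduct.comm k V V).toLinearMap + TensorProduct.mk k V V one ∘ₗ TensorProduct.lift br

@[simp]
lemma braiding_tmul (br : V →ₗ[k] V →ₗ[k] V) (one v w : V) :
    braiding br one (v ⊗ₜ w) = w ⊗ₜ v + one ⊗ₜ br v w := rfl

def actTwice (ρ : M ⊗[k] V →ₗ[k] M) : (M ⊗[k] V) ⊗[k] V →ₗ[k] M :=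
  ρ ∘ₗ LinearMap.rTensor V ρ

@[simp]
lemma actTwice_tmul (ρ : M ⊗[k] V →ₗ[k] M) (m : M) (v w : V) :
    actTwice ρ ((m ⊗ₜ v) ⊗ₜ w) = ρ (ρ (m ⊗ₜ v) ⊗ₜ w) := rfl

def braidedActTwice (br : V →ₗ[k] V →ₗ[k] V) (one : V) (ρ : M ⊗[k] V →ₗ[k] M) :
    (M ⊗[k] V) ⊗[k] V →ₗ[k] M :=
  actTwice ρ ∘ₗ (TensorProduct.assoc k M V V).symm.toLinearMap ∘ₗ
    LinearMap.lTensor M (braiding br one) ∘ₗ (TensorProduct.assoc k M V V).toLinearMap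

lemma braidedActTwice_tmul (br : V →ₗ[k] V →ₗ[k] V) (one : V) (ρ : M ⊗[k] V →ₗ[k] M)
    (m : M) (v w : V) :
    braidedActTwice br one ρ ((m ⊗ₜ v) ⊗ₜ w) =
      ρ (ρ (m ⊗ₜ w) ⊗ₜ v) + ρ (ρ (m ⊗ₜ one) ⊗ₜ br v w) := by
  simp [braidedActTwice, TensorProduct.tmul_add]

lemma actTwice_eq_braidedActTwice_iff (br : V →ₗ[k] V →ₗ[k] V) (one : V)
    (ρ : M ⊗[k] V →ₗ[k] M) :
    actTwice ρ = braidedActTwice br one ρ ↔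
      ∀ (m : M) (v w : V),
        ρ (ρ (m ⊗ₜ v) ⊗ₜ w) = ρ (ρ (m ⊗ₜ w) ⊗ₜ v) + ρ (ρ (m ⊗ₜ one) ⊗ₜ br v w) := by
  refine ⟨fun h m v w => ?_, fun h => TensorProduct.ext_threefold fun m v w => ?_⟩
  · simpa [braidedActTwice_tmul] using LinearMap.congr_fun h ((m ⊗ₜ v) ⊗ₜ w)
  · simpa [braidedActTwice_tmul] using h m v w

end LeibnizModule

open LeibnizModule in
theorem braided_module_iff_leibniz_module_general
    {k V M : Type*} [CommRing k] [AddCommGroup V] [Module k V]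
    [AddCommGroup M] [Module k M]
    (br : V →ₗ[k] V →ₗ[k] V) (one : V)
    (ρ : M ⊗[k] V →ₗ[k] M)
    (hnorm : ∀ m : M, ρ (m ⊗ₜ one) = m) :
    (ρ ∘ₗ LinearMap.rTensor V ρ =
      ρ ∘ₗ LinearMap.rTensor V ρ ∘ₗ
        (TensorProduct.assoc k M V V).symm.toLinearMap ∘ₗ
        LinearMap.lTensor M
          ((TensorProduct.comm k V V).toLinearMap +
            (TensorProduct.mk k V V one) ∘ₗ (TensorProduct.lift br)) ∘ₗ
        (TensorProduct.assoc k M V V).toLinearMap)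
    ↔
    (∀ (m : M) (v w : V),
      ρ (m ⊗ₜ br v w) = ρ (ρ (m ⊗ₜ v) ⊗ₜ w) - ρ (ρ (m ⊗ₜ w) ⊗ₜ v)) := by
  refine (actTwice_eq_braidedActTwice_iff br one ρ).trans (forall_congr' fun m => ?_)
  simp only [hnorm, eq_sub_iff_add_eq', eq_comm]

/-- for a unital Leibniz algebra `(V, [,], 1)` with braiding
`σ(v⊗w) = w⊗v + 1⊗[v,w]` and a normalized map `ρ : M ⊗ V → M` (`ρ(m⊗1) = m`), the
braided module condition `ρ ∘ (ρ ⊗ id) = ρ ∘ (ρ ⊗ id) ∘ (id_M ⊗ σ)` is equivalent to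
the Leibniz module condition `m·[v,w] = (m·v)·w − (m·w)·v`. -/
theorem braided_module_iff_leibniz_module
    {k V M : Type*} [CommRing k] [AddCommGroup V] [Module k V]
    [AddCommGroup M] [Module k M]
    (br : V →ₗ[k] V →ₗ[k] V) (one : V)
    (hLeibniz : ∀ v w u : V, br v (br w u) = br (br v w) u - br (br v u) w)
    (hcentral_l : ∀ v : V, br one v = 0)
    (hcentral_r : ∀ v : V, br v one = 0)
    (ρ : M ⊗[k] V →ₗ[k] M)
    (hnorm : ∀ m : M, ρ (m ⊗ₜ one) = m) :
    (ρ ∘ₗ LinearMap.rTensor V ρ =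
      ρ ∘ₗ LinearMap.rTensor V ρ ∘ₗ
        (TensorProduct.assoc k M V V).symm.toLinearMap ∘ₗ
        LinearMap.lTensor M
          ((TensorProduct.comm k V V).toLinearMap +
            (TensorProduct.mk k V V one) ∘ₗ (TensorProduct.lift br)) ∘ₗ
        (TensorProduct.assoc k M V V).toLinearMap)
    ↔
    (∀ (m : M) (v w : V),
      ρ (m ⊗ₜ br v w) = ρ (ρ (m ⊗ₜ v) ⊗ₜ w) - ρ (ρ (m ⊗ₜ w) ⊗ₜ v)) :=
  braided_module_iff_leibniz_module_general br one ρ hnorm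
end
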